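/- Let γ > 0. Define erfi(x) = (2/√π)∫_0^x e^{t²} dt and K(z) = −(1/γ)·√((1−z)/z³)·(2z−1)·e^{1/(2z)} + (√(2πe)/γ)·erfi(√((1−z)/(2z))) for z ∈ (0,1). Then K is differentiable on (0,1) with K'(z) = −e^{1/(2z)} / (2γ·z^{7/2}·√(1−z)) for every z ∈ (0,1). -/

import Mathlib

/-- The imaginary error function erfi(x) = (2/√π)∫_0^x e^{t²} dt. -/
noncomputable def erfi (x : ℝ) : ℝ :=
  (2 / Real.sqrt Real.pi) * ∫ t in (0 : ℝ)..x, Real.exp (t ^ 2)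

/-- Optimal homodyne function
K(z) = −(1/γ)√((1−z)/z³)(2z−1)e^{1/(2z)} + (√(2πe)/γ)erfi(√((1−z)/(2z))). -/
noncomputable def Khom (γ z : ℝ) : ℝ :=
  -(1 / γ) * Real.sqrt ((1 - z) / z ^ 3) * (2 * z - 1) * Real.exp (1 / (2 * z))
    + (Real.sqrt (2 * Real.pi * Real.exp 1) / γ) *
        erfi (Real.sqrt ((1 - z) / (2 * z)))

/-!
Write `K_γ = K_1 / γ` and differentiate the two terms of `K_1` separately. The elementary term
has derivative `e^{1/(2z)} (1 - 2z²) / (2 z^{7/2} √(1-z))`. At `u = √((1-z)/(2z))` one has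
`e^{u²} = e^{1/(2z)} / √e`, so the prefactor `√(2πe)` makes the `erfi` term contribute exactly
`-e^{1/(2z)} / (z^{3/2} √(1-z)) = -2z² e^{1/(2z)} / (2 z^{7/2} √(1-z))`, and the two add up to
`-e^{1/(2z)} / (2 z^{7/2} √(1-z))`.
-/

open Real

theorem hasDerivAt_erfi (x : ℝ) : HasDerivAt erfi (2 / √π * exp (x ^ 2)) x :=
  ((continuous_id.pow 2).rexp.integral_hasStrictDerivAt 0 x).hasDerivAt.const_mul _

theorem Khom_eq_inv_mul (γ z : ℝ) : Khom γ z = γ⁻¹ * Khom 1 z := by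
  simp only [Khom]
  ring

section

variable {z : ℝ}

theorem sqrt_one_sub_div_pow_three (hz : 0 < z) :
    √((1 - z) / z ^ 3) = √(1 - z) / (z * √z) := by
  rw [sqrt_div' _ (by positivity), pow_succ, sqrt_mul (by positivity), sqrt_sq hz.le]

theorem hasDerivAt_sqrt_one_sub_div_pow_three (hz0 : 0 < z) (hz1 : z < 1) :
    HasDerivAt (fun z => √((1 - z) / z ^ 3))
      ((2 * z - 3) / (2 * z ^ 2 * √z * √(1 - z))) z := by
  have hq := ((hasDerivAt_id' z).const_sub 1).fun_div (hasDerivAt_pow 3 z) (by positivity)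
  convert hq.sqrt (div_pos (by linarith) (by positivity)).ne' using 1
  rw [sqrt_one_sub_div_pow_three hz0]
  field_simp
  rw [sq_sqrt hz0.le]
  push_cast
  ring

theorem hasDerivAt_sqrt_one_sub_div_two_mul (hz0 : 0 < z) (hz1 : z < 1) :
    HasDerivAt (fun z => √((1 - z) / (2 * z))) (-1 / (2 * √2 * z * √z * √(1 - z))) z := by
  have hr := ((hasDerivAt_id' z).const_sub 1).fun_div ((hasDerivAt_id' z).const_mul 2)
    (by positivity)
  convert hr.sqrt (div_pos (by linarith) (by positivity)).ne' using 1
  rw [sqrt_div' _ (by positivity), sqrt_mul zero_le_two]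
  field_simp
  rw [sq_sqrt zero_le_two, sq_sqrt hz0.le]
  ring

theorem hasDerivAt_sqrt_one_sub_div_pow_three_mul_exp (hz0 : 0 < z) (hz1 : z < 1) :
    HasDerivAt (fun z => √((1 - z) / z ^ 3) * (2 * z - 1) * exp (1 / (2 * z)))
      (exp (1 / (2 * z)) * (1 - 2 * z ^ 2) / (2 * z ^ 3 * √z * √(1 - z))) z := by
  have hexp := ((hasDerivAt_const z 1).fun_div ((hasDerivAt_id' z).const_mul 2)
    (by positivity)).exp
  have hlin := ((hasDerivAt_id' z).const_mul 2).sub_const 1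
  refine (((hasDerivAt_sqrt_one_sub_div_pow_three hz0 hz1).fun_mul hlin).fun_mul
    hexp).congr_deriv ?_
  symm
  rw [sqrt_one_sub_div_pow_three hz0]
  field_simp
  rw [sq_sqrt (by linarith)]
  ring

theorem hasDerivAt_sqrt_two_pi_exp_one_mul_erfi (hz0 : 0 < z) (hz1 : z < 1) :
    HasDerivAt (fun z => √(2 * π * exp 1) * erfi √((1 - z) / (2 * z)))
      (-exp (1 / (2 * z)) / (z * √z * √(1 - z))) z := by
  refine (((hasDerivAt_erfi _).comp z (hasDerivAt_sqrt_one_sub_div_two_mul hz0 hz1)).const_mul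
    (√(2 * π * exp 1))).congr_deriv ?_
  symm
  rw [sq_sqrt (div_pos (by linarith) (by positivity)).le,
    show (1 - z) / (2 * z) = 1 / (2 * z) - 1 / 2 by field_simp, exp_sub,
    sqrt_mul (by positivity), sqrt_mul zero_le_two, ← exp_half]
  field_simp

theorem hasDerivAt_Khom_one (hz0 : 0 < z) (hz1 : z < 1) :
    HasDerivAt (Khom 1) (-exp (1 / (2 * z)) / (2 * z ^ ((7 : ℝ) / 2) * √(1 - z))) z := by
  have h := (hasDerivAt_sqrt_one_sub_div_pow_three_mul_exp hz0 hz1).fun_neg.fun_add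
    (hasDerivAt_sqrt_two_pi_exp_one_mul_erfi hz0 hz1)
  have hrpow : z ^ ((7 : ℝ) / 2) = z ^ 3 * √z := by
    rw [show (7 : ℝ) / 2 = (3 : ℕ) + 1 / 2 by norm_num, rpow_add hz0, rpow_natCast,
      sqrt_eq_rpow]
  refine (h.congr_of_eventuallyEq (.of_forall fun y => by simp [Khom])).congr_deriv ?_
  rw [hrpow]
  field_simp
  ring

end

theorem hom_K_hasDerivAt_general (γ : ℝ) :
    ∀ z ∈ Set.Ioo (0 : ℝ) 1,
      HasDerivAt (Khom γ)
        (-Real.exp (1 / (2 * z)) /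
          (2 * γ * z ^ ((7 : ℝ) / 2) * Real.sqrt (1 - z))) z := by
  rintro z ⟨hz0, hz1⟩
  refine (((hasDerivAt_Khom_one hz0 hz1).const_mul γ⁻¹).congr_of_eventuallyEq
    (.of_forall (Khom_eq_inv_mul γ))).congr_deriv ?_
  ring

/-- K is an antiderivative of −2/(QB²) = −e^{1/(2z)}/(2γ z^{7/2} √(1−z)) on
(0,1). -/
theorem hom_K_hasDerivAt (γ : ℝ) (hγ : 0 < γ) :
    ∀ z ∈ Set.Ioo (0 : ℝ) 1,
      HasDerivAt (Khom γ)
        (-Real.exp (1 / (2 * z)) /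
          (2 * γ * z ^ ((7 : ℝ) / 2) * Real.sqrt (1 - z))) z :=
  hom_K_hasDerivAt_general γ
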